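/- arXiv:1406.5675 — 3 statements merged into one kernel-verified Lean document; each statement's English description precedes it below -/
import Mathlib

section
/- Let K be an n×n real symmetric positive semidefinite matrix, let P ∈ R^{n×c} be a column selection matrix, and set C = K P ∈ R^{n×c} and W = P^T K P ∈ R^{c×c}. Then the following three statements are equivalent: (i) rank(W) = rank(K); (ii) K = C W† C^T; (iii) K = C C† K (C†)^T C^T. -/
open Matrix BigOperators
open scoped Classical

noncomputable section

/-- `B` satisfies the four Penrose conditions for `A`. -/
def IsMoorePenrose {m n : Type*} [Fintype m] [Fintype n]
    (A : Matrix m n ℝ) (B : Matrix n m ℝ) : Prop :=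
  A * B * A = A ∧ B * A * B = B ∧ (A * B)ᵀ = A * B ∧ (B * A)ᵀ = B * A

/-- The Moore–Penrose pseudoinverse of a real matrix (defined via the unique
matrix satisfying the four Penrose conditions, which always exists). -/
def pinv {m n : Type*} [Fintype m] [Fintype n] (A : Matrix m n ℝ) : Matrix n m ℝ :=
  if h : ∃ B, IsMoorePenrose A B then h.choose else 0

/-- Squared Frobenius norm. -/
def frobSq {m n : Type*} [Fintype m] [Fintype n] (A : Matrix m n ℝ) : ℝ :=
  ∑ i, ∑ j, (A i j) ^ 2

/-- Frobenius norm. -/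
def frobNorm {m n : Type*} [Fintype m] [Fintype n] (A : Matrix m n ℝ) : ℝ :=
  Real.sqrt (frobSq A)

/-- Eigenvalues of a (hermitian) real matrix, sorted in descending order
(junk value `0` if the matrix is not hermitian). -/
def eigsDesc {n : ℕ} (A : Matrix (Fin n) (Fin n) ℝ) : Fin n → ℝ :=
  if hA : A.IsHermitian then
    fun i => hA.eigenvalues (Tuple.sort (fun j => -hA.eigenvalues j) i)
  else 0

/-- Singular values of a real matrix, sorted in descending order. -/
def svalsDesc {m n : ℕ} (A : Matrix (Fin m) (Fin n) ℝ) : Fin n → ℝ :=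
  fun i => Real.sqrt (eigsDesc (Aᵀ * A) i)

/-- Spectral norm (largest singular value). -/
def specNorm {m n : ℕ} (A : Matrix (Fin m) (Fin n) ℝ) : ℝ := ⨆ i, svalsDesc A i

/-- `Ak` is a best rank-`k` approximation of `A` in Frobenius norm. -/
def IsBestRankApprox {m n : Type*} [Fintype m] [Fintype n]
    (A Ak : Matrix m n ℝ) (k : ℕ) : Prop :=
  Ak.rank ≤ k ∧ ∀ X : Matrix m n ℝ, X.rank ≤ k → frobSq (A - Ak) ≤ frobSq (A - X)

/-- `P` is a column selection matrix: each column is a distinct standard basis vector. -/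
def IsColSelection {n c : ℕ} (P : Matrix (Fin n) (Fin c) ℝ) : Prop :=
  ∃ f : Fin c → Fin n, Function.Injective f ∧
    P = Matrix.of fun i j => if i = f j then 1 else 0

/-- Adaptive sampling probabilities for a residual matrix `B`
(uniform in the degenerate case `B = 0`). -/
def adaptP {m n : Type*} [Fintype m] [Fintype n] (B : Matrix m n ℝ) : n → ℝ :=
  fun j => if frobSq B = 0 then (Fintype.card n : ℝ)⁻¹ else (∑ i, (B i j) ^ 2) / frobSq B

/-- Uniform sampling matrix with entries `√(n/s)` at positions `(t j, j)`. -/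
def uSamp (n : ℕ) {s : ℕ} (t : Fin s → Fin n) : Matrix (Fin n) (Fin s) ℝ :=
  Matrix.of fun i j => if i = t j then Real.sqrt ((n : ℝ) / s) else 0

/-- Weighted sampling matrix with entries `1/√(s p i)` at positions `(t j, j)`. -/
def wSamp {n s : ℕ} (p : Fin n → ℝ) (t : Fin s → Fin n) : Matrix (Fin n) (Fin s) ℝ :=
  Matrix.of fun i j => if i = t j then 1 / Real.sqrt (s * p i) else 0

end

/-! Write `K = AᵀA` and `B = AP`, so that `C = AᵀB` and `W = BᵀB`; then `rank W = rank B = rank C`.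
If `rank W = rank K = rank A`, the columns of `B` span those of `A`, say `A = BZ`, and since
`B W† W = B` (a Gram-matrix cancellation of `W W† W = W`) we get `C W† Cᵀ = AᵀB W† W Z = AᵀA`.
Likewise `rank C = rank K` gives `K = CZ'`, so `C C† K = K`, and transposing yields (iii).
Conversely (ii) and (iii) factor `K` through `W†` and `C`, whose ranks are at most `rank W`.

The pseudoinverse of `A` is `(AᵀA)⁺Aᵀ`, where `(AᵀA)⁺` applies `x ↦ x⁻¹` (with `0⁻¹ = 0`) to
the eigenvalues of `AᵀA`. -/

open scoped MatrixOrder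

section Field

variable {R : Type*} [Field R] {m n k : Type*} [Fintype n] [Fintype k]

lemma exists_eq_mul_of_range_le {X : Matrix m n R} {Y : Matrix m k R}
    (h : LinearMap.range X.mulVecLin ≤ LinearMap.range Y.mulVecLin) :
    ∃ Z : Matrix k n R, X = Y * Z := by
  have hcol : ∀ j, X.mulVecLin (Pi.single j 1) ∈ LinearMap.range Y.mulVecLin :=
    fun j => h (LinearMap.mem_range_self _ _)
  choose z hz using hcol
  refine ⟨Matrix.of fun i j => z j i, ?_⟩
  ext i j
  have hij := congrFun (hz j) i
  simp only [mulVecLin_apply, mulVec_single_one, col_apply] at hij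
  rw [← hij, mul_apply]
  simp [mulVec, dotProduct]

lemma exists_eq_mul_mul_of_rank_mul_eq {Y : Matrix m n R} {P : Matrix n k R}
    (h : (Y * P).rank = Y.rank) : ∃ Z : Matrix k n R, Y = Y * P * Z := by
  have hle : LinearMap.range (Y * P).mulVecLin ≤ LinearMap.range Y.mulVecLin := by
    rw [mulVecLin_mul]; exact LinearMap.range_comp_le_range _ _
  exact exists_eq_mul_of_range_le (Submodule.eq_of_le_of_finrank_eq hle h).ge

end Field

variable {m n k : Type*} [Fintype m] [Fintype n] [Fintype k]

lemma mul_eq_of_transpose_mul_self_mul_eq {B : Matrix m n ℝ} {X : Matrix n n ℝ}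
    (h : Bᵀ * B * X = Bᵀ * B) : B * X = B := by
  have hgram : (B * X - B)ᵀ * (B * X - B) = 0 := by
    calc (B * X - B)ᵀ * (B * X - B) = (Xᵀ - 1) * (Bᵀ * B * X - Bᵀ * B) := by
          simp only [transpose_sub, transpose_mul, Matrix.sub_mul, Matrix.mul_sub, Matrix.one_mul,
            Matrix.mul_assoc]
      _ = 0 := by rw [h, sub_self, mul_zero]
  rw [← conjTranspose_eq_transpose_of_trivial, conjTranspose_mul_self_eq_zero] at hgram
  exact sub_eq_zero.mp hgram

lemma isMoorePenrose_cfc_inv {S : Matrix n n ℝ} (hS : S.IsHermitian) :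
    IsMoorePenrose S (cfc (·⁻¹ : ℝ → ℝ) S) := by
  have hSa : IsSelfAdjoint S := hS.isSelfAdjoint
  -- the spectrum is finite, so the discontinuity of `x ↦ x⁻¹` at `0` is harmless
  have hinv : ContinuousOn (·⁻¹ : ℝ → ℝ) (spectrum ℝ S) := S.finite_real_spectrum.continuousOn _
  set T := cfc (·⁻¹ : ℝ → ℝ) S
  have hTt : Tᵀ = T := by
    rw [← conjTranspose_eq_transpose_of_trivial]; exact IsSelfAdjoint.cfc.star_eq
  have hSt : Sᵀ = S := by rw [← conjTranspose_eq_transpose_of_trivial]; exact hS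
  have hTS : T * S = S * T := by
    simpa only [cfc_id' ℝ S] using (cfc_commute_cfc (·⁻¹) (fun x : ℝ => x) S).eq
  refine ⟨?_, ?_, by rw [transpose_mul, hTt, hSt, hTS], by rw [transpose_mul, hTt, hSt, hTS]⟩
  · calc S * T * S = cfc (fun x : ℝ => x * x⁻¹ * x) S := by
          rw [cfc_mul (fun x : ℝ => x * x⁻¹) (fun x => x) S, cfc_mul (fun x : ℝ => x) (·⁻¹) S,
            cfc_id' ℝ S]
      _ = S := by simp only [mul_inv_mul_cancel]; exact cfc_id' ℝ S
  · calc T * S * T = cfc (fun x : ℝ => x⁻¹ * x * x⁻¹) S := by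
          rw [cfc_mul (fun x : ℝ => x⁻¹ * x) (·⁻¹) S, cfc_mul (·⁻¹) (fun x : ℝ => x) S,
            cfc_id' ℝ S]
      _ = T := by congr 1; funext x; simpa using mul_inv_mul_cancel x⁻¹

lemma exists_isMoorePenrose (A : Matrix m n ℝ) : ∃ B, IsMoorePenrose A B := by
  have hS : (Aᵀ * A).IsHermitian := by
    simpa only [conjTranspose_eq_transpose_of_trivial] using isHermitian_conjTranspose_mul_self A
  obtain ⟨hSTS, hTST, -, hTS⟩ := isMoorePenrose_cfc_inv hS
  set T := cfc (·⁻¹ : ℝ → ℝ) (Aᵀ * A)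
  have hT : Tᵀ = T := by
    rw [← conjTranspose_eq_transpose_of_trivial]; exact IsSelfAdjoint.cfc.star_eq
  have hATS : A * (T * (Aᵀ * A)) = A :=
    mul_eq_of_transpose_mul_self_mul_eq (by rw [← Matrix.mul_assoc, hSTS])
  refine ⟨T * Aᵀ, ?_, ?_, ?_, ?_⟩
  · simpa only [Matrix.mul_assoc] using hATS
  · calc T * Aᵀ * A * (T * Aᵀ) = T * (Aᵀ * A) * T * Aᵀ := by simp only [Matrix.mul_assoc]
      _ = T * Aᵀ := by rw [hTST]
  · rw [transpose_mul, transpose_mul, transpose_transpose, hT, Matrix.mul_assoc]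
  · simpa only [Matrix.mul_assoc] using hTS

lemma isMoorePenrose_pinv (A : Matrix m n ℝ) : IsMoorePenrose A (pinv A) := by
  rw [pinv, dif_pos (exists_isMoorePenrose A)]
  exact (exists_isMoorePenrose A).choose_spec

lemma rank_pinv_le (A : Matrix m n ℝ) : (pinv A).rank ≤ A.rank := by
  rw [← (isMoorePenrose_pinv A).2.1]
  exact (rank_mul_le_left _ _).trans (rank_mul_le_right _ _)

lemma eq_mul_pinv_mul_mul_pinv_transpose_mul_transpose {K : Matrix n n ℝ} (hK : Kᵀ = K)
    {P : Matrix n k ℝ} (h : (K * P).rank = K.rank) :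
    K = K * P * pinv (K * P) * K * (pinv (K * P))ᵀ * (K * P)ᵀ := by
  obtain ⟨Z, hZ⟩ := exists_eq_mul_mul_of_rank_mul_eq h
  set C := K * P
  have hCK : C * pinv C * K = K := by
    nth_rw 1 [hZ]
    rw [← Matrix.mul_assoc, (isMoorePenrose_pinv C).1, ← hZ]
  calc K = (C * pinv C * K)ᵀ := by rw [hCK, hK]
    _ = K * (pinv C)ᵀ * Cᵀ := by rw [transpose_mul, transpose_mul, hK, Matrix.mul_assoc]
    _ = C * pinv C * K * (pinv C)ᵀ * Cᵀ := by rw [hCK]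

namespace Matrix.PosSemidef

lemma rank_transpose_mul_mul {K : Matrix n n ℝ} (hK : K.PosSemidef) (P : Matrix n k ℝ) :
    (Pᵀ * K * P).rank = (K * P).rank := by
  obtain ⟨A, rfl⟩ := CStarAlgebra.nonneg_iff_eq_star_mul_self.mp hK.nonneg
  have hA : star A = Aᵀ := conjTranspose_eq_transpose_of_trivial A
  have hW : Pᵀ * (star A * A) * P = (A * P)ᵀ * (A * P) := by
    simp only [hA, transpose_mul, Matrix.mul_assoc]
  refine le_antisymm (by rw [Matrix.mul_assoc]; exact rank_mul_le_right _ _) ?_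
  calc (star A * A * P).rank = (Aᵀ * (A * P)).rank := by rw [hA, Matrix.mul_assoc]
    _ ≤ (A * P).rank := rank_mul_le_right _ _
    _ = (Pᵀ * (star A * A) * P).rank := by rw [hW, rank_transpose_mul_self]

lemma eq_mul_pinv_mul_transpose {K : Matrix n n ℝ} (hK : K.PosSemidef) {P : Matrix n k ℝ}
    (h : (Pᵀ * K * P).rank = K.rank) : K = K * P * pinv (Pᵀ * K * P) * (K * P)ᵀ := by
  obtain ⟨A, rfl⟩ := CStarAlgebra.nonneg_iff_eq_star_mul_self.mp hK.nonneg
  rw [show star A = Aᵀ from conjTranspose_eq_transpose_of_trivial A] at h ⊢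
  set B := A * P
  have hW : Pᵀ * (Aᵀ * A) * P = Bᵀ * B := by simp only [B, transpose_mul, Matrix.mul_assoc]
  rw [hW] at h ⊢
  set W := Bᵀ * B
  have hB : B.rank = A.rank := by
    rw [← rank_transpose_mul_self B, h, rank_transpose_mul_self]
  obtain ⟨Z, hZ⟩ := exists_eq_mul_mul_of_rank_mul_eq hB
  have hBVW : B * (pinv W * W) = B :=
    mul_eq_of_transpose_mul_self_mul_eq (by rw [← Matrix.mul_assoc, (isMoorePenrose_pinv W).1])
  have hCt : (Aᵀ * A * P)ᵀ = W * Z :=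
    calc (Aᵀ * A * P)ᵀ = Bᵀ * A := by
          simp only [B, transpose_mul, transpose_transpose, Matrix.mul_assoc]
      _ = Bᵀ * (B * Z) := congrArg _ hZ
      _ = W * Z := (Matrix.mul_assoc _ _ _).symm
  calc Aᵀ * A = Aᵀ * (B * (pinv W * W) * Z) := by rw [hBVW, ← hZ]
    _ = Aᵀ * A * P * pinv W * (Aᵀ * A * P)ᵀ := by rw [hCt]; simp only [B, Matrix.mul_assoc]

end Matrix.PosSemidef

theorem spsd_exact_recovery_general {n c : ℕ} (K : Matrix (Fin n) (Fin n) ℝ) (hK : K.PosSemidef)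
    (P : Matrix (Fin n) (Fin c) ℝ)
    (C : Matrix (Fin n) (Fin c) ℝ) (W : Matrix (Fin c) (Fin c) ℝ)
    (hC : C = K * P) (hW : W = Pᵀ * K * P) :
    (W.rank = K.rank ↔ K = C * pinv W * Cᵀ) ∧
      (W.rank = K.rank ↔ K = C * pinv C * K * (pinv C)ᵀ * Cᵀ) := by
  subst hC hW
  have hWC : (Pᵀ * K * P).rank = (K * P).rank := hK.rank_transpose_mul_mul P
  have hCK : (K * P).rank ≤ K.rank := rank_mul_le_left _ _
  have hKt : Kᵀ = K := by rw [← conjTranspose_eq_transpose_of_trivial]; exact hK.isHermitian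
  refine ⟨⟨hK.eq_mul_pinv_mul_transpose, fun h => le_antisymm (hWC ▸ hCK) ?_⟩,
    ⟨fun h => eq_mul_pinv_mul_mul_pinv_transpose_mul_transpose hKt (hWC ▸ h),
      fun h => hWC ▸ le_antisymm hCK ?_⟩⟩
  · calc K.rank = (K * P * pinv (Pᵀ * K * P) * (K * P)ᵀ).rank := by rw [← h]
      _ ≤ (pinv (Pᵀ * K * P)).rank := (rank_mul_le_left _ _).trans (rank_mul_le_right _ _)
      _ ≤ (Pᵀ * K * P).rank := rank_pinv_le _
  · calc K.rank = (K * P * (pinv (K * P) * K * (pinv (K * P))ᵀ * (K * P)ᵀ)).rank := by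
          nth_rw 1 [h]; simp only [Matrix.mul_assoc]
      _ ≤ (K * P).rank := rank_mul_le_left _ _

/-- For an SPSD matrix `K`, a column selection matrix `P`,
`C = K P` and `W = Pᵀ K P`, the conditions (i) `rank W = rank K`,
(ii) `K = C W† Cᵀ`, (iii) `K = C C† K (C†)ᵀ Cᵀ` are equivalent. -/
theorem spsd_exact_recovery {n c : ℕ} (K : Matrix (Fin n) (Fin n) ℝ) (hK : K.PosSemidef)
    (P : Matrix (Fin n) (Fin c) ℝ) (hP : IsColSelection P)
    (C : Matrix (Fin n) (Fin c) ℝ) (W : Matrix (Fin c) (Fin c) ℝ)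
    (hC : C = K * P) (hW : W = Pᵀ * K * P) :
    (W.rank = K.rank ↔ K = C * pinv W * Cᵀ) ∧
      (W.rank = K.rank ↔ K = C * pinv C * K * (pinv C)ᵀ * Cᵀ) :=
  spsd_exact_recovery_general K hK P C W hC hW
end

section
/- Let n, k, c be positive integers with k < n, let η > 0, and let P ∈ R^{n×c} be a fixed matrix such that for every n×n real symmetric matrix A, setting C = A P, one has ‖A − C C† A (C†)^T C^T‖_F² ≤ η ‖A − A_k‖_F². Let K be any n×n real symmetric positive semidefinite matrix, let δ̄ = (1/(n−k))(tr(K) − Σ_{j=1}^k σ_j(K)), set K̄ = K − δ̄ I_n, C̄ = K̄ P, and define the inexact spectral shifting approximation K̃^{iss} = C̄ C̄† K̄ (C̄†)^T C̄^T + δ̄ I_n. Then ‖K − K̃^{iss}‖_F² ≤ η ( ‖K − K_k‖_F² − (Σ_{i=k+1}^n λ_i(K))² / (n − k) ), where λ_1(K) ≥ … ≥ λ_n(K) are the eigenvalues of K. -/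
open Matrix BigOperators
open scoped Classical

/-!
Applying the hypothesis on `P` to the symmetric matrix `K̄ = K - δ̄ I` bounds the error by
`η ‖K̄ - K̄_k‖_F²`. In an eigenbasis of `K` the matrix `K̄` is diagonal with entries `λ_i - δ̄`, so
truncating it to its first `k` entries gives a rank-`k` competitor with error
`∑_{i > k} (λ_i - δ̄)²`. As `δ̄` is the mean of the tail `λ_{k+1}, …, λ_n`, this error equals
`∑_{i > k} λ_i² - (∑_{i > k} λ_i)² / (n - k)`, and `∑_{i > k} λ_i² ≤ ‖K - K_k‖_F²` by the
Eckart–Young lower bound. That bound comes from compressing `A - X` to the kernel of `X`, of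
dimension at least `n - k`: there only `A` survives, and its energy on any subspace of that
dimension is at least the sum of its `n - k` smallest squared eigenvalues.
-/

section Frobenius

variable {l m n : Type*} [Fintype l] [Fintype m] [Fintype n]

lemma frobSq_eq_trace (A : Matrix m n ℝ) : frobSq A = (Aᵀ * A).trace := by
  rw [frobSq, trace, Finset.sum_comm]
  simp [mul_apply, pow_two]

lemma frobSq_nonneg (A : Matrix m n ℝ) : 0 ≤ frobSq A := by
  unfold frobSq
  positivity

lemma frobSq_diagonal [DecidableEq n] (d : n → ℝ) : frobSq (diagonal d) = ∑ i, d i ^ 2 := by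
  simp [frobSq, diagonal_apply]

lemma frobSq_mul_mul_transpose [DecidableEq n] {U : Matrix n n ℝ} (hU : Uᵀ * U = 1)
    (M : Matrix n n ℝ) : frobSq (U * M * Uᵀ) = frobSq M := by
  have h : (U * M * Uᵀ)ᵀ * (U * M * Uᵀ) = U * (Mᵀ * M) * Uᵀ := by
    simp only [transpose_mul, transpose_transpose, Matrix.mul_assoc, ← Matrix.mul_assoc Uᵀ U, hU,
      Matrix.one_mul]
  rw [frobSq_eq_trace, frobSq_eq_trace, h, trace_mul_cycle, hU, Matrix.one_mul]

lemma frobSq_transpose_mul_mul [DecidableEq n] {U : Matrix n n ℝ} (hU : Uᵀ * U = 1)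
    (M : Matrix n n ℝ) : frobSq (Uᵀ * M * U) = frobSq M := by
  simpa using frobSq_mul_mul_transpose (U := Uᵀ) (by simpa using mul_eq_one_comm.mp hU) M

lemma frobSq_mul_eq_trace_of_idempotent {Q : Matrix n n ℝ} (hQt : Qᵀ = Q) (hQ : Q * Q = Q)
    (M : Matrix m n ℝ) : frobSq (M * Q) = (Mᵀ * M * Q).trace := by
  rw [frobSq_eq_trace, transpose_mul, hQt, Matrix.mul_assoc, trace_mul_comm, Matrix.mul_assoc,
    Matrix.mul_assoc, hQ, Matrix.mul_assoc]

lemma frobSq_mul_le [DecidableEq l] [DecidableEq n] {B : Matrix n l ℝ} (hB : Bᵀ * B = 1)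
    (M : Matrix m n ℝ) : frobSq (M * B) ≤ frobSq M := by
  set Q : Matrix n n ℝ := 1 - B * Bᵀ
  have hQt : Qᵀ = Q := by simp [Q]
  have hQ : Q * Q = Q := by
    simp only [Q, Matrix.sub_mul, Matrix.mul_sub, Matrix.mul_one, Matrix.one_mul,
      Matrix.mul_assoc, ← Matrix.mul_assoc Bᵀ B, hB, Matrix.one_mul, sub_self, sub_zero]
  have hsplit : frobSq M = frobSq (M * B) + frobSq (M * Q) := by
    have hB' : ((M * B)ᵀ * (M * B)).trace = (Mᵀ * M * (B * Bᵀ)).trace := by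
      rw [transpose_mul, Matrix.mul_assoc, trace_mul_comm]
      simp only [Matrix.mul_assoc]
    rw [frobSq_mul_eq_trace_of_idempotent hQt hQ, frobSq_eq_trace, frobSq_eq_trace, hB',
      Matrix.mul_sub, trace_sub, Matrix.mul_one]
    ring
  linarith [frobSq_nonneg (M * Q)]

end Frobenius

section OrthonormalColumns

variable {l m n : Type*} [Fintype l] [Fintype n]

lemma sum_sq_apply_le_one [DecidableEq l] {B : Matrix n l ℝ} (hB : Bᵀ * B = 1) (i : n) :
    ∑ j, B i j ^ 2 ≤ 1 := by
  have h := frobSq_mul_le hB (single (0 : Fin 1) i (1 : ℝ))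
  simpa [frobSq, single_mul_apply_same, Matrix.single_apply, Finset.filter_eq] using h

lemma sum_sum_sq_eq_card [DecidableEq l] {B : Matrix n l ℝ} (hB : Bᵀ * B = 1) :
    ∑ i, ∑ j, B i j ^ 2 = Fintype.card l := by
  rw [← frobSq, frobSq_eq_trace, hB, trace_one]

lemma exists_orthonormal_columns_mul_eq_zero [Fintype m] (X : Matrix m n ℝ) :
    ∃ (r : ℕ) (B : Matrix n (Fin r) ℝ), Bᵀ * B = 1 ∧ X * B = 0 ∧
      Fintype.card n ≤ r + X.rank := by
  have hdim : Fintype.card n ≤ Module.finrank ℝ (LinearMap.ker (toEuclideanLin X)) + X.rank := by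
    have hrank : X.rank = Module.finrank ℝ (LinearMap.range (toEuclideanLin X)) := by
      rw [toEuclideanLin_eq_toLin_orthonormal, rank_eq_finrank_range_toLin X
        (EuclideanSpace.basisFun m ℝ).toBasis (EuclideanSpace.basisFun n ℝ).toBasis]
    have := LinearMap.finrank_range_add_finrank_ker (toEuclideanLin X)
    rw [finrank_euclideanSpace] at this
    omega
  have hker : ∀ v ∈ LinearMap.ker (toEuclideanLin X), X *ᵥ v.ofLp = 0 := fun v hv => by
    simpa [toLpLin_apply] using congrArg WithLp.ofLp hv
  generalize LinearMap.ker (toEuclideanLin X) = V at hdim hker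
  let b := stdOrthonormalBasis ℝ V
  refine ⟨Module.finrank ℝ V, of fun i j => (b j : EuclideanSpace ℝ n) i, ?_, ?_, hdim⟩
  · ext j j'
    have h := orthonormal_iff_ite.mp b.orthonormal j j'
    rw [Submodule.coe_inner, PiLp.inner_apply] at h
    rw [mul_apply, one_apply, ← h]
    refine Finset.sum_congr rfl fun i _ => ?_
    simp only [transpose_apply, of_apply, RCLike.inner_apply, conj_trivial, mul_comm]
  · ext i j
    simpa [mul_apply, mulVec, dotProduct] using congrFun (hker _ (b j).2) i

end OrthonormalColumns

section EckartYoung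

open Finset

variable {n : ℕ}

lemma card_filter_le_val (k : ℕ) : #{i : Fin n | k ≤ (i : ℕ)} = n - k := by
  have h := card_filter_add_card_filter_not (s := (univ : Finset (Fin n))) (fun i => (i : ℕ) < k)
  simp only [not_lt, card_univ, Fintype.card_fin, Fin.card_filter_val_lt] at h
  omega

lemma sum_filter_le_sum_mul {k : ℕ} {μ c : Fin n → ℝ} (hμ : Antitone μ) (hμ0 : ∀ i, 0 ≤ μ i)
    (hc0 : ∀ i, 0 ≤ c i) (hc1 : ∀ i, c i ≤ 1) (hc : (n : ℝ) - k ≤ ∑ i, c i) :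
    ∑ i ∈ {i : Fin n | k ≤ (i : ℕ)}, μ i ≤ ∑ i, μ i * c i := by
  rcases lt_or_ge k n with hk | hk
  · -- compare both sides with the threshold value `t = μ k`
    set t := μ ⟨k, hk⟩
    have key : ∀ i : Fin n, (if k ≤ (i : ℕ) then μ i else 0) ≤
        μ i * c i + t * ((if k ≤ (i : ℕ) then 1 else 0) - c i) := by
      intro i
      split_ifs with hi
      · nlinarith [hμ (show (⟨k, hk⟩ : Fin n) ≤ i from hi), hc1 i]
      · nlinarith [hμ (show i ≤ ⟨k, hk⟩ from (not_le.mp hi).le), hc0 i]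
    have hcard : ∑ i : Fin n, (if k ≤ (i : ℕ) then (1 : ℝ) else 0) = n - k := by
      rw [sum_boole, card_filter_le_val, Nat.cast_sub hk.le]
    calc ∑ i ∈ {i : Fin n | k ≤ (i : ℕ)}, μ i
        = ∑ i : Fin n, (if k ≤ (i : ℕ) then μ i else 0) := sum_filter _ _
      _ ≤ ∑ i, μ i * c i + t * ((n - k) - ∑ i, c i) := by
        grw [sum_le_sum fun i _ => key i]
        rw [sum_add_distrib, ← mul_sum, sum_sub_distrib, hcard]
      _ ≤ ∑ i, μ i * c i := by nlinarith [hμ0 ⟨k, hk⟩]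
  · have hempty : ({i : Fin n | k ≤ (i : ℕ)} : Finset (Fin n)) = ∅ := by
      ext i
      simpa using i.2.trans_le hk
    rw [hempty, sum_empty]
    exact sum_nonneg fun i _ => mul_nonneg (hμ0 i) (hc0 i)

lemma sum_filter_sq_le_frobSq_diagonal_sub {k : ℕ} {d : Fin n → ℝ}
    (hd : Antitone fun i => d i ^ 2) {Y : Matrix (Fin n) (Fin n) ℝ} (hY : Y.rank ≤ k) :
    ∑ i ∈ {i : Fin n | k ≤ (i : ℕ)}, d i ^ 2 ≤ frobSq (diagonal d - Y) := by
  obtain ⟨r, B, hB, hYB, hr⟩ := exists_orthonormal_columns_mul_eq_zero Y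
  have hmass : (n : ℝ) - k ≤ ∑ i, ∑ j, B i j ^ 2 := by
    rw [sum_sum_sq_eq_card hB, Fintype.card_fin]
    rw [Fintype.card_fin] at hr
    have : (n : ℝ) ≤ r + k := by exact_mod_cast hr.trans (by omega)
    linarith
  calc ∑ i ∈ {i : Fin n | k ≤ (i : ℕ)}, d i ^ 2
      ≤ ∑ i, d i ^ 2 * ∑ j, B i j ^ 2 :=
        sum_filter_le_sum_mul hd (fun i => sq_nonneg _) (fun i => by positivity)
          (sum_sq_apply_le_one hB) hmass
    _ = frobSq (diagonal d * B) := by simp [frobSq, diagonal_mul, mul_pow, mul_sum]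
    _ = frobSq ((diagonal d - Y) * B) := by rw [Matrix.sub_mul, hYB, sub_zero]
    _ ≤ frobSq (diagonal d - Y) := frobSq_mul_le hB _

lemma sum_filter_sq_le_frobSq_sub {k : ℕ} {U : Matrix (Fin n) (Fin n) ℝ} (hU : Uᵀ * U = 1)
    {d : Fin n → ℝ} (hd : Antitone fun i => d i ^ 2) {X : Matrix (Fin n) (Fin n) ℝ}
    (hX : X.rank ≤ k) :
    ∑ i ∈ {i : Fin n | k ≤ (i : ℕ)}, d i ^ 2 ≤ frobSq (U * diagonal d * Uᵀ - X) := by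
  have hY : (Uᵀ * X * U).rank ≤ k :=
    ((rank_mul_le_left _ _).trans (rank_mul_le_right _ _)).trans hX
  have hconj : Uᵀ * (U * diagonal d * Uᵀ - X) * U = diagonal d - Uᵀ * X * U := by
    rw [Matrix.mul_sub, Matrix.sub_mul]
    simp only [Matrix.mul_assoc, ← Matrix.mul_assoc Uᵀ U, hU, Matrix.one_mul, Matrix.mul_one]
  calc _ ≤ frobSq (diagonal d - Uᵀ * X * U) := sum_filter_sq_le_frobSq_diagonal_sub hd hY
    _ = frobSq (U * diagonal d * Uᵀ - X) := by rw [← hconj, frobSq_transpose_mul_mul hU]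

end EckartYoung

section Spectral

variable {ι : Type*} [Fintype ι] [DecidableEq ι]

lemma Matrix.IsHermitian.exists_orthogonal_conj_diagonal {A : Matrix ι ι ℝ}
    (hA : A.IsHermitian) :
    ∃ U : Matrix ι ι ℝ, Uᵀ * U = 1 ∧ A = U * diagonal hA.eigenvalues * Uᵀ := by
  refine ⟨hA.eigenvectorUnitary, ?_, ?_⟩
  · have h := mem_unitaryGroup_iff'.mp hA.eigenvectorUnitary.2
    rwa [star_eq_conjTranspose, conjTranspose_eq_transpose_of_trivial] at h
  · have h := hA.spectral_theorem
    rw [Unitary.conjStarAlgAut_apply, star_eq_conjTranspose,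
      conjTranspose_eq_transpose_of_trivial] at h
    simpa using h

lemma exists_orthogonal_conj_diagonal_comp {U : Matrix ι ι ℝ} (hU : Uᵀ * U = 1) (d : ι → ℝ)
    (σ : Equiv.Perm ι) :
    ∃ V : Matrix ι ι ℝ, Vᵀ * V = 1 ∧ U * diagonal d * Uᵀ = V * diagonal (d ∘ σ) * Vᵀ := by
  refine ⟨U.submatrix (Equiv.refl ι) σ, ?_, ?_⟩
  · rw [transpose_submatrix, submatrix_mul_equiv, hU, submatrix_one_equiv]
  · rw [← submatrix_diagonal_equiv, transpose_submatrix, submatrix_mul_equiv,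
      submatrix_mul_equiv]
    rfl

lemma conj_diagonal_sub_smul_one {U : Matrix ι ι ℝ} (hU : Uᵀ * U = 1) (d : ι → ℝ) (c : ℝ) :
    U * diagonal d * Uᵀ - c • 1 = U * diagonal (fun i => d i - c) * Uᵀ := by
  have hU' : U * Uᵀ = 1 := mul_eq_one_comm.mp hU
  rw [← diagonal_sub, Matrix.mul_sub, Matrix.sub_mul, ← smul_one_eq_diagonal, Matrix.mul_smul,
    Matrix.smul_mul, Matrix.mul_one, hU']

end Spectral

section SortedEigenvalues

open Finset

variable {n : ℕ} {A K : Matrix (Fin n) (Fin n) ℝ}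

lemma eigsDesc_of_isHermitian (hA : A.IsHermitian) :
    eigsDesc A = hA.eigenvalues ∘ Tuple.sort (fun j => -hA.eigenvalues j) := by
  rw [eigsDesc, dif_pos hA]
  rfl

lemma Matrix.IsHermitian.antitone_eigsDesc (hA : A.IsHermitian) : Antitone (eigsDesc A) := by
  rw [eigsDesc_of_isHermitian hA]
  intro i j hij
  simpa using Tuple.monotone_sort (fun j => -hA.eigenvalues j) hij

lemma Matrix.IsHermitian.exists_orthogonal_conj_diagonal_eigsDesc (hA : A.IsHermitian) :
    ∃ U : Matrix (Fin n) (Fin n) ℝ, Uᵀ * U = 1 ∧ A = U * diagonal (eigsDesc A) * Uᵀ := by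
  obtain ⟨U, hU, hAU⟩ := hA.exists_orthogonal_conj_diagonal
  obtain ⟨V, hV, hUV⟩ := exists_orthogonal_conj_diagonal_comp hU hA.eigenvalues
    (Tuple.sort fun j => -hA.eigenvalues j)
  exact ⟨V, hV, eigsDesc_of_isHermitian hA ▸ hAU.trans hUV⟩

/-- Both `eigsDesc A` and `d` list the roots of the characteristic polynomial, sorted. -/
lemma Matrix.IsHermitian.eigsDesc_eq_of_conj_diagonal (hA : A.IsHermitian)
    {U : Matrix (Fin n) (Fin n) ℝ} (hU : Uᵀ * U = 1) {d : Fin n → ℝ} (hd : Antitone d)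
    (h : A = U * diagonal d * Uᵀ) : eigsDesc A = d := by
  have hchar : A.charpoly = (diagonal d).charpoly := by
    rw [h, charpoly_mul_comm, ← Matrix.mul_assoc, hU, Matrix.one_mul]
  have hroots : Multiset.map (eigsDesc A) univ.val = Multiset.map d univ.val := by
    have h' := hA.roots_charpoly_eq_eigenvalues
    rw [hchar, charpoly_diagonal, Polynomial.roots_prod _ _
      (prod_ne_zero_iff.mpr fun i _ => Polynomial.X_sub_C_ne_zero (d i))] at h'
    rw [eigsDesc_of_isHermitian hA, ← Multiset.map_map, Multiset.map_univ_val_equiv]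
    simpa using h'.symm
  refine List.ofFn_injective (List.Perm.eq_of_sortedGE hA.antitone_eigsDesc.sortedGE_ofFn
    hd.sortedGE_ofFn ?_)
  rw [← Multiset.coe_eq_coe, ← Fin.univ_val_map, ← Fin.univ_val_map, hroots]

lemma Matrix.IsHermitian.trace_eq_sum_eigsDesc (hA : A.IsHermitian) :
    A.trace = ∑ i, eigsDesc A i := by
  rw [hA.trace_eq_sum_eigenvalues, eigsDesc_of_isHermitian hA]
  simp only [Function.comp_apply, Equiv.sum_comp, RCLike.ofReal_real_eq_id, id]

lemma Matrix.PosSemidef.eigsDesc_nonneg (hK : K.PosSemidef) (i : Fin n) : 0 ≤ eigsDesc K i := by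
  rw [eigsDesc_of_isHermitian hK.1]
  exact hK.eigenvalues_nonneg _

lemma Matrix.PosSemidef.antitone_eigsDesc_sq (hK : K.PosSemidef) :
    Antitone fun i => eigsDesc K i ^ 2 := fun _ j hij =>
  pow_le_pow_left₀ (hK.eigsDesc_nonneg j) (hK.1.antitone_eigsDesc hij) 2

lemma Matrix.PosSemidef.svalsDesc_eq_eigsDesc (hK : K.PosSemidef) : svalsDesc K = eigsDesc K := by
  obtain ⟨U, hU, hKU⟩ := hK.1.exists_orthogonal_conj_diagonal_eigsDesc
  have hsq : Kᵀ * K = U * diagonal (fun i => eigsDesc K i ^ 2) * Uᵀ := by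
    rw [(isHermitian_iff_isSymm.mp hK.1).eq]
    conv_lhs => rw [hKU]
    simp only [Matrix.mul_assoc, ← Matrix.mul_assoc Uᵀ U, hU, Matrix.one_mul,
      ← Matrix.mul_assoc (diagonal _), diagonal_mul_diagonal, sq]
  have hKK : (Kᵀ * K).IsHermitian := isHermitian_iff_isSymm.mpr (isSymm_transpose_mul_self K)
  have hsq' := hKK.eigsDesc_eq_of_conj_diagonal hU hK.antitone_eigsDesc_sq hsq
  funext i
  rw [svalsDesc, hsq', Real.sqrt_sq (hK.eigsDesc_nonneg i)]

lemma sum_castLE_eq_sum_filter_lt {k : ℕ} (hk : k ≤ n) (f : Fin n → ℝ) :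
    ∑ j : Fin k, f (Fin.castLE hk j) = ∑ i ∈ {i : Fin n | (i : ℕ) < k}, f i := by
  have h : univ.map (Fin.castLEEmb hk) = univ.filter (fun i : Fin n => (i : ℕ) < k) := by
    ext i
    simp only [mem_map, mem_univ, true_and, mem_filter, Fin.castLEEmb_apply]
    exact ⟨fun ⟨j, hj⟩ => hj ▸ j.2, fun hi => ⟨⟨i, hi⟩, rfl⟩⟩
  rw [← h, sum_map]
  rfl

lemma Matrix.PosSemidef.trace_sub_sum_svalsDesc (hK : K.PosSemidef) {k : ℕ} (hk : k ≤ n) :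
    K.trace - ∑ j : Fin k, svalsDesc K (Fin.castLE hk j) =
      ∑ i ∈ {i : Fin n | k ≤ (i : ℕ)}, eigsDesc K i := by
  rw [hK.svalsDesc_eq_eigsDesc, sum_castLE_eq_sum_filter_lt, hK.1.trace_eq_sum_eigsDesc,
    ← sum_filter_add_sum_filter_not univ (fun i : Fin n => (i : ℕ) < k)]
  simp

end SortedEigenvalues

section BestRankApprox

open Finset

variable {n : ℕ}

def truncate (k : ℕ) (d : Fin n → ℝ) : Fin n → ℝ := fun i => if (i : ℕ) < k then d i else 0

lemma rank_conj_diagonal_truncate_le (U : Matrix (Fin n) (Fin n) ℝ) (k : ℕ) (d : Fin n → ℝ) :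
    (U * diagonal (truncate k d) * Uᵀ).rank ≤ k := by
  calc (U * diagonal (truncate k d) * Uᵀ).rank ≤ (diagonal (truncate k d)).rank :=
        (rank_mul_le_left _ _).trans (rank_mul_le_right _ _)
    _ = Fintype.card {i // truncate k d i ≠ 0} := rank_diagonal _
    _ ≤ Fintype.card {i : Fin n // (i : ℕ) < k} :=
        Fintype.card_subtype_mono _ _ fun i hi => by
          by_contra hik
          simp [truncate, hik] at hi
    _ ≤ k := by
        rw [Fintype.card_subtype, Fin.card_filter_val_lt]
        exact min_le_right _ _

lemma frobSq_conj_diagonal_sub_truncate {U : Matrix (Fin n) (Fin n) ℝ} (hU : Uᵀ * U = 1)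
    (k : ℕ) (d : Fin n → ℝ) :
    frobSq (U * diagonal d * Uᵀ - U * diagonal (truncate k d) * Uᵀ) =
      ∑ i ∈ {i : Fin n | k ≤ (i : ℕ)}, d i ^ 2 := by
  rw [← Matrix.sub_mul, ← Matrix.mul_sub, diagonal_sub, frobSq_mul_mul_transpose hU,
    frobSq_diagonal, sum_filter]
  refine sum_congr rfl fun i _ => ?_
  by_cases hik : (i : ℕ) < k <;> simp [truncate, hik]

/-- The witness truncates an orthogonal diagonalization ordered by decreasing absolute value. -/
lemma exists_isBestRankApprox {A : Matrix (Fin n) (Fin n) ℝ} (hA : A.IsSymm) (k : ℕ) :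
    ∃ Ak, IsBestRankApprox A Ak k := by
  have hA' := isHermitian_iff_isSymm.mpr hA
  obtain ⟨U, hU, hAU⟩ := hA'.exists_orthogonal_conj_diagonal
  set σ := Tuple.sort fun j => -hA'.eigenvalues j ^ 2
  obtain ⟨V, hV, hUV⟩ := exists_orthogonal_conj_diagonal_comp hU hA'.eigenvalues σ
  set d := hA'.eigenvalues ∘ σ
  have hd : Antitone fun i => d i ^ 2 := fun i j hij => by
    simpa [d, σ] using Tuple.monotone_sort (fun j => -hA'.eigenvalues j ^ 2) hij
  rw [hAU, hUV]
  refine ⟨V * diagonal (truncate k d) * Vᵀ, rank_conj_diagonal_truncate_le V k d, fun X hX => ?_⟩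
  rw [frobSq_conj_diagonal_sub_truncate hV]
  exact sum_filter_sq_le_frobSq_sub hV hd hX

end BestRankApprox

lemma sum_sub_sum_div_card_sq {ι : Type*} (s : Finset ι) (f : ι → ℝ) :
    ∑ i ∈ s, (f i - (∑ j ∈ s, f j) / s.card) ^ 2 =
      ∑ i ∈ s, f i ^ 2 - (∑ i ∈ s, f i) ^ 2 / s.card := by
  rcases s.eq_empty_or_nonempty with rfl | hs
  · simp
  have hcard : (s.card : ℝ) ≠ 0 := by exact_mod_cast hs.card_pos.ne'
  simp only [sub_sq, Finset.sum_add_distrib, Finset.sum_sub_distrib, ← Finset.sum_mul,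
    ← Finset.mul_sum, Finset.sum_const, nsmul_eq_mul]
  field_simp
  ring

/-- Error bound for the inexact spectral shifting model. -/
theorem inexact_spectral_shifting_error_bound {n k c : ℕ} (hkn : k < n)
    {η : ℝ} (hη : 0 < η)
    (P : Matrix (Fin n) (Fin c) ℝ)
    (hP : ∀ (A Ak : Matrix (Fin n) (Fin n) ℝ), A.IsSymm → IsBestRankApprox A Ak k →
        frobSq (A - (A * P) * pinv (A * P) * A * (pinv (A * P))ᵀ * (A * P)ᵀ) ≤
          η * frobSq (A - Ak))
    (K : Matrix (Fin n) (Fin n) ℝ) (hK : K.PosSemidef)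
    (δbar : ℝ)
    (hδbar : δbar = (K.trace - ∑ j : Fin k, svalsDesc K (Fin.castLE hkn.le j)) / ((n : ℝ) - k))
    (Kbar : Matrix (Fin n) (Fin n) ℝ) (hKbar : Kbar = K - δbar • (1 : Matrix (Fin n) (Fin n) ℝ))
    (Cbar : Matrix (Fin n) (Fin c) ℝ) (hCbar : Cbar = Kbar * P)
    (Ktil : Matrix (Fin n) (Fin n) ℝ)
    (hKtil : Ktil = Cbar * pinv Cbar * Kbar * (pinv Cbar)ᵀ * Cbarᵀ +
      δbar • (1 : Matrix (Fin n) (Fin n) ℝ))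
    (Kk : Matrix (Fin n) (Fin n) ℝ) (hKk : IsBestRankApprox K Kk k) :
    frobSq (K - Ktil) ≤
      η * (frobSq (K - Kk) -
        (∑ i ∈ Finset.univ.filter (fun i : Fin n => k ≤ (i : ℕ)), eigsDesc K i) ^ 2 /
          ((n : ℝ) - k)) := by
  set e := eigsDesc K
  obtain ⟨U, hU, hKU⟩ := hK.1.exists_orthogonal_conj_diagonal_eigsDesc
  have hKbarU : Kbar = U * diagonal (fun i => e i - δbar) * Uᵀ := by
    rw [hKbar, ← conj_diagonal_sub_smul_one hU, ← hKU]
  have hKbar_symm : Kbar.IsSymm :=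
    hKbar ▸ (isHermitian_iff_isSymm.mp hK.1).sub (isSymm_one.smul _)
  obtain ⟨Akb, hAkb⟩ := exists_isBestRankApprox hKbar_symm k
  have hcard : ((Finset.univ.filter fun i : Fin n => k ≤ (i : ℕ)).card : ℝ) = n - k := by
    rw [card_filter_le_val, Nat.cast_sub hkn.le]
  have hδ : δbar = (∑ i ∈ Finset.univ.filter (fun i : Fin n => k ≤ (i : ℕ)), e i) /
      (Finset.univ.filter fun i : Fin n => k ≤ (i : ℕ)).card := by
    rw [hδbar, hK.trace_sub_sum_svalsDesc, hcard]
  have hres : K - Ktil = Kbar - Cbar * pinv Cbar * Kbar * (pinv Cbar)ᵀ * Cbarᵀ := by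
    rw [hKtil, hKbar]
    abel
  calc frobSq (K - Ktil) ≤ η * frobSq (Kbar - Akb) := hres ▸ hCbar ▸ hP Kbar Akb hKbar_symm hAkb
    _ ≤ η * frobSq (Kbar - U * diagonal (truncate k fun i => e i - δbar) * Uᵀ) := by
      gcongr
      exact hAkb.2 _ (rank_conj_diagonal_truncate_le U k _)
    _ = η * (∑ i ∈ Finset.univ.filter (fun i : Fin n => k ≤ (i : ℕ)), e i ^ 2 -
          (∑ i ∈ Finset.univ.filter (fun i : Fin n => k ≤ (i : ℕ)), e i) ^ 2 / ((n : ℝ) - k)) := by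
      rw [hKbarU, frobSq_conj_diagonal_sub_truncate hU, hδ, sum_sub_sum_div_card_sq, hcard]
    _ ≤ _ := by
      gcongr
      exact hKU ▸ sum_filter_sq_le_frobSq_sub hU hK.antitone_eigsDesc_sq hKk.1
end

section
/- Let K be an n×n real symmetric positive semidefinite matrix and C̄ ∈ R^{n×c} any matrix. Then tr(C̄† K C̄) ≤ tr(K); consequently, if rank(C̄) < n, the spectral shifting term δ^{ss} = (tr(K) − tr(C̄† K C̄))/(n − rank(C̄)) is nonnegative, and if moreover K is positive definite (of full rank n) then δ^{ss} > 0. -/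
open Matrix BigOperators
open scoped Classical

/-! `P = C̄ C̄†` is an orthogonal projection (first and third Penrose conditions) and
`tr(C̄† K C̄) = tr(K P)`, so `tr K - tr(C̄† K C̄) = tr((1 - P)ᴴ K (1 - P))`. This is `≥ 0` for
`K ⪰ 0`, and `> 0` for `K ≻ 0` unless `P = 1`, which `rank P ≤ rank C̄ < n` excludes. -/

open scoped ComplexOrder

namespace Matrix

variable {m n R 𝕜 : Type*} [Fintype m] [Fintype n]

lemma IsStarProjection.trace_conjTranspose_mul_mul [CommRing R] [StarRing R]
    {Q : Matrix n n R} (hQ : IsStarProjection Q) (K : Matrix n n R) :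
    (Qᴴ * K * Q).trace = (K * Q).trace := by
  rw [show Qᴴ = Q from hQ.isSelfAdjoint, trace_mul_cycle, hQ.isIdempotentElem.eq,
    trace_mul_comm]

lemma PosDef.trace_conjTranspose_mul_mul_pos [RCLike 𝕜] {K : Matrix n n 𝕜} (hK : K.PosDef)
    {B : Matrix n m 𝕜} (hB : B ≠ 0) : 0 < (Bᴴ * K * B).trace := by
  refine (hK.posSemidef.conjTranspose_mul_mul_same B).trace_nonneg.lt_of_ne' fun h => hB ?_
  have hBKB := (hK.posSemidef.conjTranspose_mul_mul_same B).trace_eq_zero_iff.mp h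
  refine ext_iff_mulVec.mpr fun x => ?_
  by_contra hx
  have hpos := hK.dotProduct_mulVec_pos (x := B *ᵥ x) (by simpa using hx)
  rw [star_mulVec, dotProduct_mulVec, vecMul_vecMul, ← dotProduct_mulVec, mulVec_mulVec,
    hBKB] at hpos
  simp at hpos

variable [DecidableEq n] [RCLike 𝕜] {K P : Matrix n n 𝕜}

lemma trace_sub_trace_mul_of_isStarProjection (hP : IsStarProjection P) :
    K.trace - (K * P).trace = ((1 - P)ᴴ * K * (1 - P)).trace := by
  rw [hP.one_sub.trace_conjTranspose_mul_mul, mul_sub, mul_one, trace_sub]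

lemma PosSemidef.trace_mul_le_of_isStarProjection (hK : K.PosSemidef)
    (hP : IsStarProjection P) : (K * P).trace ≤ K.trace := by
  rw [← sub_nonneg, trace_sub_trace_mul_of_isStarProjection hP]
  exact (hK.conjTranspose_mul_mul_same (1 - P)).trace_nonneg

lemma PosDef.trace_mul_lt_of_isStarProjection (hK : K.PosDef)
    (hP : IsStarProjection P) (hP1 : P ≠ 1) : (K * P).trace < K.trace := by
  rw [← sub_pos, trace_sub_trace_mul_of_isStarProjection hP]
  exact hK.trace_conjTranspose_mul_mul_pos (sub_ne_zero.mpr hP1.symm)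

end Matrix

-- The junk value `pinv A = 0` also gives a projection, so existence of `A†` is never needed.
lemma isStarProjection_mul_pinv {m n : Type*} [Fintype m] [Fintype n] (A : Matrix m n ℝ) :
    IsStarProjection (A * pinv A) := by
  by_cases h : ∃ B, IsMoorePenrose A B
  · obtain ⟨hABA, -, hAB, -⟩ := h.choose_spec
    rw [pinv, dif_pos h]
    refine ⟨?_, hAB⟩
    rw [IsIdempotentElem, ← Matrix.mul_assoc, hABA]
  · rw [pinv, dif_neg h, Matrix.mul_zero]
    exact .zero _

/-- `tr(C̄† K C̄) ≤ tr(K)`; hence the spectral shifting term is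
nonnegative, and positive when `K` is positive definite. -/
theorem spectral_shifting_term_nonneg {n c : ℕ}
    (K : Matrix (Fin n) (Fin n) ℝ) (hK : K.PosSemidef)
    (Cbar : Matrix (Fin n) (Fin c) ℝ) :
    (pinv Cbar * K * Cbar).trace ≤ K.trace ∧
      (Cbar.rank < n →
        0 ≤ (K.trace - (pinv Cbar * K * Cbar).trace) / ((n : ℝ) - Cbar.rank)) ∧
      (Cbar.rank < n → K.PosDef →
        0 < (K.trace - (pinv Cbar * K * Cbar).trace) / ((n : ℝ) - Cbar.rank)) := by
  have hP := isStarProjection_mul_pinv Cbar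
  have htrace : (pinv Cbar * K * Cbar).trace = (K * (Cbar * pinv Cbar)).trace := by
    rw [trace_mul_cycle, trace_mul_comm]
  have hle : (pinv Cbar * K * Cbar).trace ≤ K.trace :=
    htrace ▸ hK.trace_mul_le_of_isStarProjection hP
  have hcodim (hr : Cbar.rank < n) : 0 < (n : ℝ) - Cbar.rank := sub_pos.mpr (mod_cast hr)
  refine ⟨hle, fun hr => div_nonneg (sub_nonneg.mpr hle) (hcodim hr).le, fun hr hKpd => ?_⟩
  have hP1 : Cbar * pinv Cbar ≠ 1 := fun h => by
    simpa [h] using (rank_mul_le_left Cbar (pinv Cbar)).trans_lt hr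
  exact div_pos (sub_pos.mpr (htrace ▸ hKpd.trace_mul_lt_of_isStarProjection hP hP1)) (hcodim hr)
end
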